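/- Let A be a commutative ring and let f : X̃ → Spec A be a morphism of schemes. Then f is surjective on semi-local schemes if and only if for every finite set P of prime ideals of A there exists a morphism of schemes Spec(A_{S_P}) → X̃ whose composite with f equals the canonical morphism Spec(A_{S_P}) → Spec A, where S_P := A \ ⋃_{p ∈ P} p and A_{S_P} denotes the localization of A at the multiplicative set S_P. (The paper's characterization lemma for the class SSL, for an affine target; Spec(A_{S_P}) is the semi-local scheme of Spec A at the finite set of points P.) -/

import Mathlib

open CategoryTheory AlgebraicGeometry

/-- A scheme is *semi-local* if it is isomorphic to the spectrum of a commutative ring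
having only finitely many maximal ideals. -/
def IsSemiLocalScheme (S : Scheme.{u}) : Prop :=
  ∃ R : CommRingCat.{u}, {I : Ideal R | I.IsMaximal}.Finite ∧ Nonempty (S ≅ Spec R)

/-- A morphism of schemes `f : X' ⟶ X` is *surjective on semi-local schemes* (belongs to the
class `SSL`) if for every semi-local scheme `S` the induced map
`Hom(S, X') → Hom(S, X)` is surjective. -/
def SurjOnSemiLocal {X' X : Scheme.{u}} (f : X' ⟶ X) : Prop :=
  ∀ S : Scheme.{u}, IsSemiLocalScheme S → ∀ g : S ⟶ X, ∃ h : S ⟶ X', h ≫ f = g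

/-- For a set `P` of prime ideals of `A`, the multiplicative set
`S_P = A \ ⋃_{p ∈ P} p`, i.e. the intersection of the complements of the primes in `P`. -/
def primeSetCompl {A : Type u} [CommRing A] (P : Set (Ideal A))
    (hP : ∀ p ∈ P, p.IsPrime) : Submonoid A :=
  ⨅ p : P, @Ideal.primeCompl A _ p.1 (hP p.1 p.2)

/-!
A semi-local scheme `Spec R` maps to `Spec A` through `Spec A_{S_P}`, where `P` is the finite
set of contractions of the maximal ideals of `R`: an element of `S_P` lies in no maximal ideal
of `R`, so it becomes a unit there. Conversely `A_{S_P}` is itself semi-local, since by prime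
avoidance every prime of `A` disjoint from `S_P` lies below a member of `P`, so the maximal
ideals of `A_{S_P}` are extended from members of `P`.
-/

section PrimeSetCompl

variable {A : Type u} [CommRing A] {P : Set (Ideal A)} (hP : ∀ p ∈ P, p.IsPrime)

lemma mem_primeSetCompl {a : A} : a ∈ primeSetCompl P hP ↔ ∀ p ∈ P, a ∉ p := by
  simp [primeSetCompl, Submonoid.mem_iInf, Ideal.primeCompl]

lemma disjoint_primeSetCompl {p : Ideal A} (hp : p ∈ P) :
    Disjoint (primeSetCompl P hP : Set A) p :=
  Set.disjoint_left.mpr fun _ ha => (mem_primeSetCompl hP).mp ha p hp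

lemma exists_le_of_disjoint_primeSetCompl (hPfin : P.Finite) {q : Ideal A}
    (hq : Disjoint (primeSetCompl P hP : Set A) q) : ∃ p ∈ P, q ≤ p := by
  refine (Ideal.subset_union_prime_finite hPfin (f := id) ⊥ ⊥
    fun p hp _ _ => hP p hp).mp fun a ha => ?_
  have ha' : a ∉ primeSetCompl P hP := fun h => Set.disjoint_left.mp hq h ha
  simpa [mem_primeSetCompl] using ha'

lemma isUnit_of_mem_primeSetCompl {R : Type*} [CommRing R] (φ : A →+* R)
    (hφ : ∀ m : Ideal R, m.IsMaximal → m.comap φ ∈ P) {a : A}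
    (ha : a ∈ primeSetCompl P hP) : IsUnit (φ a) := by
  by_contra hu
  obtain ⟨m, hm, ham⟩ := exists_max_ideal_of_mem_nonunits hu
  exact (mem_primeSetCompl hP).mp ha _ (hφ m hm) ham

lemma under_mem_of_isMaximal_of_isLocalization {L : Type*} [CommRing L] [Algebra A L]
    [IsLocalization (primeSetCompl P hP) L] (hPfin : P.Finite) {I : Ideal L}
    (hI : I.IsMaximal) : I.under A ∈ P := by
  have hdisj := ((IsLocalization.isPrime_iff_isPrime_disjoint (primeSetCompl P hP) L I).mp
    hI.isPrime).2
  obtain ⟨p, hp, hle⟩ := exists_le_of_disjoint_primeSetCompl hP hPfin hdisj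
  have hp_disj := disjoint_primeSetCompl hP hp
  have hI_eq : I = p.map (algebraMap A L) := by
    refine hI.eq_of_le
      (IsLocalization.isPrime_of_isPrime_disjoint _ L p (hP p hp) hp_disj).ne_top ?_
    rw [← IsLocalization.map_under (primeSetCompl P hP) L I]
    exact Ideal.map_mono hle
  rwa [hI_eq, IsLocalization.under_map_of_isPrime_disjoint _ L (hP p hp) hp_disj]

lemma finite_setOf_isMaximal_of_isLocalization_primeSetCompl (L : Type*) [CommRing L]
    [Algebra A L] [IsLocalization (primeSetCompl P hP) L] (hPfin : P.Finite) :
    {I : Ideal L | I.IsMaximal}.Finite :=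
  Set.Finite.of_finite_image (f := Ideal.under A)
    (hPfin.subset (Set.image_subset_iff.mpr fun _ hI =>
      under_mem_of_isMaximal_of_isLocalization hP hPfin hI))
    (IsLocalization.orderEmbedding (primeSetCompl P hP) L).injective.injOn

end PrimeSetCompl

lemma isSemiLocalScheme_spec_localization_primeSetCompl {A : Type u} [CommRing A]
    {P : Set (Ideal A)} (hPfin : P.Finite) (hP : ∀ p ∈ P, p.IsPrime) :
    IsSemiLocalScheme (Spec (CommRingCat.of (Localization (primeSetCompl P hP)))) :=
  ⟨_, finite_setOf_isMaximal_of_isLocalization_primeSetCompl hP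
    (Localization (primeSetCompl P hP)) hPfin, ⟨Iso.refl _⟩⟩

lemma exists_factor_through_spec_localization_primeSetCompl {A : Type u} [CommRing A]
    {R : CommRingCat.{u}} (hR : {I : Ideal R | I.IsMaximal}.Finite)
    (g : Spec R ⟶ Spec (CommRingCat.of A)) :
    ∃ (P : Set (Ideal A)) (_ : P.Finite) (hP : ∀ p ∈ P, p.IsPrime)
      (k : Spec R ⟶ Spec (CommRingCat.of (Localization (primeSetCompl P hP)))),
      k ≫ Spec.map (CommRingCat.ofHom (algebraMap A (Localization (primeSetCompl P hP)))) =
        g := by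
  set φ := (Spec.preimage g).hom
  set P : Set (Ideal A) := Ideal.comap φ '' {I : Ideal R | I.IsMaximal}
  have hP : ∀ p ∈ P, p.IsPrime := by
    rintro _ ⟨m, hm, rfl⟩
    exact hm.isPrime.comap φ
  have hunits (a : primeSetCompl P hP) : IsUnit (φ a) :=
    isUnit_of_mem_primeSetCompl hP φ (fun m hm => ⟨m, hm, rfl⟩) a.2
  refine ⟨P, hR.image _, hP,
    Spec.map (CommRingCat.ofHom (IsLocalization.lift (M := primeSetCompl P hP) hunits)), ?_⟩
  rw [← Spec.map_comp, ← CommRingCat.ofHom_comp, IsLocalization.lift_comp]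
  exact Spec.map_preimage g

/-- Characterization of the class `SSL` for an affine target: a morphism of schemes
`f : X̃ ⟶ Spec A` is surjective on semi-local schemes if and only if for every finite set `P`
of prime ideals of `A` the canonical morphism `Spec A_{S_P} ⟶ Spec A` (the semi-local scheme
of `Spec A` at `P`) lifts along `f`. -/
theorem surjOnSemiLocal_iff_forall_finset_primes {A : Type u} [CommRing A]
    (Xtil : Scheme.{u}) (f : Xtil ⟶ Spec (CommRingCat.of A)) :
    SurjOnSemiLocal f ↔
      ∀ (P : Set (Ideal A)) (_ : P.Finite) (hP : ∀ p ∈ P, p.IsPrime),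
        ∃ h : Spec (CommRingCat.of (Localization (primeSetCompl P hP))) ⟶ Xtil,
          h ≫ f =
            Spec.map (CommRingCat.ofHom
              (algebraMap A (Localization (primeSetCompl P hP)))) := by
  refine ⟨fun hf P hPfin hP =>
    hf _ (isSemiLocalScheme_spec_localization_primeSetCompl hPfin hP) _, ?_⟩
  rintro H S ⟨R, hR, ⟨e⟩⟩ g
  obtain ⟨P, hPfin, hP, k, hk⟩ :=
    exists_factor_through_spec_localization_primeSetCompl hR (e.inv ≫ g)
  obtain ⟨h, hh⟩ := H P hPfin hP
  refine ⟨e.hom ≫ k ≫ h, ?_⟩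
  rw [Category.assoc, Category.assoc, hh, hk, Iso.hom_inv_id_assoc]
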